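/- Let Σ be a set of pairs of words over ℕ in which every pair is balanced, and let u, v be words over ℕ. If every finite nil semigroup that satisfies all identities in Σ also satisfies the identity (u,v), then (u,v) belongs to the fully invariant congruence Λ generated by Σ; equivalently, every semigroup satisfying all identities in Σ satisfies the identity (u,v). -/

import Mathlib

/-- A semigroup `S` satisfies the identity `(u, v)` over the alphabet `X` if every map
`X → S` sends `u` and `v` (under the induced semigroup homomorphism) to the same
element. -/
def SatisfiesId (S : Type*) [Semigroup S] {X : Type*}
    (p : FreeSemigroup X × FreeSemigroup X) : Prop :=
  ∀ σ : X → S, FreeSemigroup.lift σ p.1 = FreeSemigroup.lift σ p.2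

/-- `spow x n` is the power `x ^ (n + 1)` in a semigroup. -/
def spow {S : Type*} [Semigroup S] (x : S) : ℕ → S
  | 0 => x
  | n + 1 => spow x n * x

/-- `z` is an (absorbing) zero element of `S`. -/
def IsZeroElem {S : Type*} [Mul S] (z : S) : Prop :=
  ∀ s : S, z * s = z ∧ s * z = z

/-- A semigroup is nil if it has a zero element `z` and every element `x` has some power
`x ^ n`, `n ≥ 1`, equal to `z`. -/
def IsNilSemigroup (S : Type*) [Semigroup S] : Prop :=
  ∃ z : S, IsZeroElem z ∧ ∀ x : S, ∃ n : ℕ, spow x n = z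

/-- The fully invariant congruence on `FreeSemigroup ℕ` generated by a set `E` of pairs
of words: the congruence generated by all pairs `(φ u, φ v)` with `(u, v) ∈ E` and `φ` a
semigroup endomorphism of `FreeSemigroup ℕ`. -/
def ficCongruence (E : Set (FreeSemigroup ℕ × FreeSemigroup ℕ)) : Con (FreeSemigroup ℕ) :=
  conGen (fun a b => ∃ p ∈ E, ∃ φ : FreeSemigroup ℕ →ₙ* FreeSemigroup ℕ,
    a = φ p.1 ∧ b = φ p.2)

/-- The list of letters of a word in the free semigroup on `ℕ`. -/
def wordLetters (u : FreeSemigroup ℕ) : List ℕ := u.head :: u.tail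

/-- A pair of words over `ℕ` is balanced if every letter occurs the same number of times
in both components. -/
def BalancedPair (p : FreeSemigroup ℕ × FreeSemigroup ℕ) : Prop :=
  ∀ x : ℕ, (wordLetters p.1).count x = (wordLetters p.2).count x

/-!
Write `F` for the free semigroup on `ℕ` and `Λ` for `ficCongruence E`. The quotient `F ⧸ Λ`
satisfies `E`, and so does each of its quotients. As the pairs in `E` are balanced, `Λ` preserves
the multiset of letters of a word, so the classes of words whose letter multiset is not below
`M := content u + content v` form an ideal of `F ⧸ Λ`. The Rees quotient by this ideal is finite
(few words have bounded content) and nil (powers have ever larger content), hence satisfies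
`(u, v)`. The classes of `u` and `v` lie outside the ideal, so they already agree in `F ⧸ Λ`.
-/

open FreeSemigroup Function

section Identities

variable {S T X : Type*} [Semigroup S] [Semigroup T]

theorem satisfiesId_iff {p : FreeSemigroup X × FreeSemigroup X} :
    SatisfiesId S p ↔ ∀ f : FreeSemigroup X →ₙ* S, f p.1 = f p.2 :=
  (lift.surjective.forall (p := fun f => f p.1 = f p.2)).symm

theorem FreeSemigroup.exists_comp_eq {g : S →ₙ* T} (hg : Surjective g)
    (f : FreeSemigroup X →ₙ* T) : ∃ f' : FreeSemigroup X →ₙ* S, g.comp f' = f :=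
  ⟨lift (surjInv hg ∘ f ∘ of), hom_ext <| funext fun _ => surjInv_eq hg _⟩

theorem SatisfiesId.of_surjective {p : FreeSemigroup X × FreeSemigroup X}
    (hp : SatisfiesId S p) {g : S →ₙ* T} (hg : Surjective g) : SatisfiesId T p := by
  rw [satisfiesId_iff] at hp ⊢
  intro f
  obtain ⟨f', rfl⟩ := exists_comp_eq hg f
  exact congrArg g (hp f')

theorem map_spow {F : Type*} [FunLike F S T] [MulHomClass F S T] (f : F) (x : S) :
    ∀ n, f (spow x n) = spow (f x) n
  | 0 => rfl
  | n + 1 => by rw [spow, map_mul, map_spow f x n, spow]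

theorem IsNilSemigroup.of_surjective (hS : IsNilSemigroup S) {g : S →ₙ* T}
    (hg : Surjective g) : IsNilSemigroup T := by
  obtain ⟨z, hz, hnil⟩ := hS
  refine ⟨g z, hg.forall.mpr fun s => ?_, hg.forall.mpr fun s => ?_⟩
  · rw [← map_mul, ← map_mul, (hz s).1, (hz s).2]
    exact ⟨rfl, rfl⟩
  · obtain ⟨n, hn⟩ := hnil s
    exact ⟨n, by rw [← map_spow, hn]⟩

end Identities

theorem Con.mkMulHom_surjective {M : Type*} [Mul M] (c : Con M) : Surjective c.mkMulHom :=
  Quotient.mk_surjective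

section Rees

variable {M N : Type*} [Semigroup M] [Semigroup N]

def IsSemigroupIdeal (I : Set M) : Prop :=
  ∀ a b, a ∈ I ∨ b ∈ I → a * b ∈ I

theorem IsSemigroupIdeal.image {I : Set M} (hI : IsSemigroupIdeal I) {f : M →ₙ* N}
    (hf : Surjective f) : IsSemigroupIdeal (f '' I) := by
  rintro x y (⟨a, ha, rfl⟩ | ⟨b, hb, rfl⟩)
  · obtain ⟨b, rfl⟩ := hf y
    exact ⟨a * b, hI a b (.inl ha), map_mul f a b⟩
  · obtain ⟨a, rfl⟩ := hf x
    exact ⟨a * b, hI a b (.inr hb), map_mul f a b⟩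

variable {I : Set M} (hI : IsSemigroupIdeal I)

def reesCon : Con M where
  r a b := a = b ∨ a ∈ I ∧ b ∈ I
  iseqv :=
    { refl := fun _ => .inl rfl
      symm := fun h => h.imp Eq.symm And.symm
      trans := by
        rintro a b c (rfl | ⟨ha, hb⟩) (rfl | ⟨hb', hc⟩)
        exacts [.inl rfl, .inr ⟨hb', hc⟩, .inr ⟨ha, hb⟩, .inr ⟨ha, hc⟩] }
  mul' := by
    rintro a b c d (rfl | ⟨ha, hb⟩) h
    · rcases h with rfl | ⟨hc, hd⟩
      exacts [.inl rfl, .inr ⟨hI _ _ (.inr hc), hI _ _ (.inr hd)⟩]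
    · exact .inr ⟨hI _ _ (.inl ha), hI _ _ (.inl hb)⟩

theorem reesCon.eq_of_notMem {a b : M} (h : reesCon hI a b) (ha : a ∉ I) : a = b :=
  h.resolve_right fun h => ha h.1

theorem reesCon.coe_eq_of_mem {a b : M} (ha : a ∈ I) (hb : b ∈ I) :
    (a : (reesCon hI).Quotient) = b :=
  (Con.eq _).mpr (.inr ⟨ha, hb⟩)

theorem reesCon.finite_quotient (hfin : Iᶜ.Finite) : Finite (reesCon hI).Quotient := by
  have hsub : (((↑) : M → (reesCon hI).Quotient) '' I).Subsingleton := by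
    rintro _ ⟨a, ha, rfl⟩ _ ⟨b, hb, rfl⟩
    exact coe_eq_of_mem hI ha hb
  refine Set.finite_univ_iff.mp
    (((hfin.image ((↑) : M → (reesCon hI).Quotient)).union hsub.finite).subset ?_)
  rintro q -
  obtain ⟨a, rfl⟩ := (reesCon hI).mkMulHom_surjective q
  by_cases ha : a ∈ I
  · exact .inr ⟨a, ha, rfl⟩
  · exact .inl ⟨a, ha, rfl⟩

theorem reesCon.isNilSemigroup_quotient [Nonempty M] (hpow : ∀ x, ∃ n, spow x n ∈ I) :
    IsNilSemigroup (reesCon hI).Quotient := by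
  obtain ⟨x₀⟩ := ‹Nonempty M›
  obtain ⟨n₀, hn₀⟩ := hpow x₀
  refine ⟨(spow x₀ n₀ : M), fun s => ?_, fun s => ?_⟩ <;>
    obtain ⟨a, rfl⟩ := (reesCon hI).mkMulHom_surjective s
  · exact ⟨coe_eq_of_mem hI (hI _ _ (.inl hn₀)) hn₀,
      coe_eq_of_mem hI (hI _ _ (.inr hn₀)) hn₀⟩
  · obtain ⟨n, hn⟩ := hpow a
    exact ⟨n, (map_spow (reesCon hI).mkMulHom a n).symm.trans (coe_eq_of_mem hI hn hn₀)⟩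

end Rees

section Content

def content (w : FreeSemigroup ℕ) : Multiset ℕ :=
  wordLetters w

theorem content_of (x : ℕ) : content (of x) = {x} :=
  rfl

theorem content_mul (a b : FreeSemigroup ℕ) : content (a * b) = content a + content b :=
  (Multiset.coe_add (wordLetters a) (wordLetters b)).symm

theorem content_map (φ : FreeSemigroup ℕ →ₙ* FreeSemigroup ℕ) (w : FreeSemigroup ℕ) :
    content (φ w) = (content w).bind (content ∘ φ ∘ of) := by
  induction w using FreeSemigroup.recOnMul with
  | ih1 x => rw [content_of, Multiset.singleton_bind]; rfl
  | ih2 x w _ ih => rw [map_mul, content_mul, content_mul, ih, content_of, Multiset.add_bind,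
      Multiset.singleton_bind]; rfl

theorem BalancedPair.content_eq {p : FreeSemigroup ℕ × FreeSemigroup ℕ} (hp : BalancedPair p) :
    content p.1 = content p.2 :=
  Multiset.coe_eq_coe.mpr (List.perm_iff_count.mpr hp)

theorem content_eq_of_ficCongruence {E : Set (FreeSemigroup ℕ × FreeSemigroup ℕ)}
    (hE : ∀ p ∈ E, BalancedPair p) {a b : FreeSemigroup ℕ} (h : ficCongruence E a b) :
    content a = content b := by
  induction h with
  | of a b hab =>
    obtain ⟨p, hp, φ, rfl, rfl⟩ := hab
    rw [content_map, content_map, (hE p hp).content_eq]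
  | refl => rfl
  | symm _ ih => exact ih.symm
  | trans _ _ ih₁ ih₂ => exact ih₁.trans ih₂
  | mul _ _ ih₁ ih₂ => rw [content_mul, content_mul, ih₁, ih₂]

theorem isSemigroupIdeal_compl_setOf_content_le (M : Multiset ℕ) :
    IsSemigroupIdeal {w : FreeSemigroup ℕ | content w ≤ M}ᶜ := by
  intro a b hab (hle : content (a * b) ≤ M)
  rw [content_mul] at hle
  rcases hab with ha | hb
  · exact ha ((Multiset.le_add_right _ _).trans hle)
  · exact hb ((Multiset.le_add_left _ _).trans hle)

theorem finite_setOf_content_le (M : Multiset ℕ) :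
    {w : FreeSemigroup ℕ | content w ≤ M}.Finite := by
  have hinj : Injective wordLetters := by
    rintro ⟨a, la⟩ ⟨b, lb⟩ h
    simpa [wordLetters] using h
  refine ((M.powerset.bind Multiset.lists).finite_toSet.preimage hinj.injOn).subset fun w hw => ?_
  exact Multiset.mem_bind.mpr
    ⟨content w, Multiset.mem_powerset.mpr hw, (Multiset.mem_lists_iff _ _).mpr rfl⟩

theorem card_content_pos (w : FreeSemigroup ℕ) : 0 < Multiset.card (content w) :=
  List.length_pos_of_ne_nil (List.cons_ne_nil _ _)

theorem card_content_spow (w : FreeSemigroup ℕ) (n : ℕ) :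
    n + 1 ≤ Multiset.card (content (spow w n)) := by
  induction n with
  | zero => exact card_content_pos w
  | succ n ih =>
    rw [spow, content_mul, Multiset.card_add]
    have := card_content_pos w
    omega

theorem spow_card_mem_compl_setOf_content_le (M : Multiset ℕ) (w : FreeSemigroup ℕ) :
    spow w (Multiset.card M) ∈ {w : FreeSemigroup ℕ | content w ≤ M}ᶜ := fun hle =>
  (card_content_spow w _).not_gt (Nat.lt_succ_of_le (Multiset.card_le_card hle))

end Content

section FullyInvariant

variable {E : Set (FreeSemigroup ℕ × FreeSemigroup ℕ)}

theorem SatisfiesId.of_ficCongruence {S : Type*} [Semigroup S] (hS : ∀ p ∈ E, SatisfiesId S p)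
    {a b : FreeSemigroup ℕ} (hab : ficCongruence E a b) : SatisfiesId S (a, b) := by
  refine satisfiesId_iff.mpr fun f => (Con.conGen_le.mpr ?_ : ficCongruence E ≤ Con.ker f) hab
  rintro _ _ ⟨p, hp, φ, rfl, rfl⟩
  exact satisfiesId_iff.mp (hS p hp) (f.comp φ)

theorem satisfiesId_quotient_ficCongruence {p : FreeSemigroup ℕ × FreeSemigroup ℕ}
    (hp : p ∈ E) : SatisfiesId (ficCongruence E).Quotient p := by
  refine satisfiesId_iff.mpr fun f => ?_
  obtain ⟨φ, rfl⟩ := exists_comp_eq (ficCongruence E).mkMulHom_surjective f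
  exact (Con.eq _).mpr (ConGen.Rel.of _ _ ⟨p, hp, φ, rfl, rfl⟩)

variable (E) in
def unboundedClasses (M : Multiset ℕ) : Set (ficCongruence E).Quotient :=
  (ficCongruence E).mkMulHom '' {w | content w ≤ M}ᶜ

theorem isSemigroupIdeal_unboundedClasses (M : Multiset ℕ) :
    IsSemigroupIdeal (unboundedClasses E M) :=
  (isSemigroupIdeal_compl_setOf_content_le M).image (ficCongruence E).mkMulHom_surjective

theorem finite_compl_unboundedClasses (M : Multiset ℕ) : (unboundedClasses E M)ᶜ.Finite := by
  refine ((finite_setOf_content_le M).image (ficCongruence E).mkMulHom).subset fun q hq => ?_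
  obtain ⟨w, rfl⟩ := (ficCongruence E).mkMulHom_surjective q
  exact ⟨w, not_not.mp fun hw => hq ⟨w, hw, rfl⟩, rfl⟩

theorem exists_spow_mem_unboundedClasses (M : Multiset ℕ) (q : (ficCongruence E).Quotient) :
    ∃ n, spow q n ∈ unboundedClasses E M := by
  obtain ⟨w, rfl⟩ := (ficCongruence E).mkMulHom_surjective q
  exact ⟨_, spow w _, spow_card_mem_compl_setOf_content_le M w, map_spow _ w _⟩

theorem coe_notMem_unboundedClasses (hE : ∀ p ∈ E, BalancedPair p) {M : Multiset ℕ}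
    {w : FreeSemigroup ℕ} (hw : content w ≤ M) :
    (w : (ficCongruence E).Quotient) ∉ unboundedClasses E M := by
  rintro ⟨w', hw', hw'w⟩
  exact hw' ((content_eq_of_ficCongruence hE ((Con.eq _).mp hw'w)).trans_le hw)

end FullyInvariant

/-- If every pair in `E` is balanced and every finite nil semigroup satisfying all
identities in `E` also satisfies the identity `(u, v)`, then `(u, v)` belongs to the
fully invariant congruence generated by `E`; equivalently, every semigroup satisfying all
identities in `E` satisfies `(u, v)`. -/
theorem nil_implies_all (E : Set (FreeSemigroup ℕ × FreeSemigroup ℕ))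
    (hE : ∀ p ∈ E, BalancedPair p) (u v : FreeSemigroup ℕ)
    (h : ∀ S : Semigrp, Finite S → IsNilSemigroup S →
      (∀ p ∈ E, SatisfiesId S p) → SatisfiesId S (u, v)) :
    ficCongruence E u v
      ∧ ∀ S : Semigrp, (∀ p ∈ E, SatisfiesId S p) → SatisfiesId S (u, v) := by
  set M := content u + content v
  have hI := isSemigroupIdeal_unboundedClasses (E := E) M
  let rees := (reesCon hI).mkMulHom
  let up := (MulEquiv.ulift.symm : (reesCon hI).Quotient ≃* ULift _).toMulHom
  have hup : Surjective up := MulEquiv.ulift.symm.surjective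
  have : Finite (reesCon hI).Quotient :=
    reesCon.finite_quotient hI (finite_compl_unboundedClasses M)
  have : Nonempty (ficCongruence E).Quotient := ⟨u⟩
  have hR := h (Semigrp.of (ULift (reesCon hI).Quotient)) inferInstance
    ((reesCon.isNilSemigroup_quotient hI (exists_spow_mem_unboundedClasses M)).of_surjective hup)
    fun p hp => (satisfiesId_quotient_ficCongruence hp).of_surjective (g := up.comp rees)
      (hup.comp (reesCon hI).mkMulHom_surjective)
  have hrees : reesCon hI u v := (Con.eq _).mp <| ULift.up_injective <|
    satisfiesId_iff.mp hR ((up.comp rees).comp (ficCongruence E).mkMulHom)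
  have huv : ficCongruence E u v := (Con.eq _).mp <|
    reesCon.eq_of_notMem hI hrees (coe_notMem_unboundedClasses hE (Multiset.le_add_right _ _))
  exact ⟨huv, fun S hS => SatisfiesId.of_ficCongruence hS huv⟩
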